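/- Let F, F', V, V' be n×n real matrices with 0 ≤ F' ≤ F entrywise, let V and V' be Metzler and Hurwitz with V' ≤ V entrywise. Then ρ(F' (V')⁻¹) ≤ ρ(F V⁻¹). -/

import Mathlib

open Matrix

def IsMetzler {n : ℕ} (A : Matrix (Fin n) (Fin n) ℝ) : Prop :=
  ∀ i j, i ≠ j → 0 ≤ A i j

def IsHurwitz {n : ℕ} (A : Matrix (Fin n) (Fin n) ℝ) : Prop :=
  ∀ μ ∈ spectrum ℂ (A.map Complex.ofReal), μ.re < 0

noncomputable def specRad {n : ℕ} (A : Matrix (Fin n) (Fin n) ℝ) : ℝ :=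
  sSup {x : ℝ | ∃ μ ∈ spectrum ℂ (A.map Complex.ofReal), x = ‖μ‖}

/-! If `0 ≤ A ≤ B` entrywise then `‖A ^ k‖ ≤ ‖B ^ k‖` in the `ℓ∞` operator norm, so Gelfand's
formula gives `ρ(A) ≤ ρ(B)`. A Metzler Hurwitz matrix `V` has `(-V)⁻¹ ≥ 0`: for small `t > 0`
the matrix `A = 1 + t V` is nonnegative with all eigenvalues `1 + t μ` inside the unit disc, so
`(-V)⁻¹ = t (1 - A)⁻¹ = t ∑ Aᵏ ≥ 0`. The resolvent identity
`(-V)⁻¹ - (-V')⁻¹ = (-V)⁻¹ (V - V') (-V')⁻¹` then yields `0 ≤ (-V')⁻¹ ≤ (-V)⁻¹`, hence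
`0 ≤ F' (-V')⁻¹ ≤ F (-V)⁻¹`, and `F (-V)⁻¹ = -(F V⁻¹)` has the same spectral radius as `F V⁻¹`. -/

open Filter Topology
open scoped ENNReal NNReal

attribute [local instance] Matrix.linftyOpNormedAddCommGroup Matrix.linftyOpNormedRing
  Matrix.linftyOpNormedAlgebra

section Entrywise

variable {ι R : Type*} [Fintype ι] [CommRing R] [PartialOrder R] [IsOrderedRing R]

lemma Matrix.mul_nonneg_of_nonneg {A B : Matrix ι ι R} (hA : ∀ i j, 0 ≤ A i j)
    (hB : ∀ i j, 0 ≤ B i j) (i j : ι) : 0 ≤ (A * B) i j :=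
  Finset.sum_nonneg fun k _ => mul_nonneg (hA i k) (hB k j)

lemma Matrix.mul_le_mul_of_nonneg {A B C D : Matrix ι ι R} (hA : ∀ i j, 0 ≤ A i j)
    (hC : ∀ i j, 0 ≤ C i j) (hAB : ∀ i j, A i j ≤ B i j) (hCD : ∀ i j, C i j ≤ D i j)
    (i j : ι) : (A * C) i j ≤ (B * D) i j :=
  Finset.sum_le_sum fun k _ =>
    mul_le_mul (hAB i k) (hCD k j) (hC k j) ((hA i k).trans (hAB i k))

variable [DecidableEq ι]

lemma Matrix.pow_nonneg_and_le {A B : Matrix ι ι R} (hA : ∀ i j, 0 ≤ A i j)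
    (hAB : ∀ i j, A i j ≤ B i j) (k : ℕ) :
    (∀ i j, 0 ≤ (A ^ k) i j) ∧ ∀ i j, (A ^ k) i j ≤ (B ^ k) i j := by
  induction k with
  | zero =>
    refine ⟨fun i j => ?_, fun _ _ => le_rfl⟩
    by_cases h : i = j <;> simp [h]
  | succ k ih =>
    simp only [pow_succ]
    exact ⟨Matrix.mul_nonneg_of_nonneg ih.1 hA,
      Matrix.mul_le_mul_of_nonneg ih.1 hA ih.2 hAB⟩

lemma Matrix.inv_le_inv_of_le {A B : Matrix ι ι R} (hA : IsUnit A.det) (hB : IsUnit B.det)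
    (hA₀ : ∀ i j, 0 ≤ A⁻¹ i j) (hB₀ : ∀ i j, 0 ≤ B⁻¹ i j) (hAB : ∀ i j, A i j ≤ B i j)
    (i j : ι) : B⁻¹ i j ≤ A⁻¹ i j := by
  have hsub : A⁻¹ - B⁻¹ = A⁻¹ * (B - A) * B⁻¹ :=
    Matrix.inv_sub_inv (by rw [A.isUnit_iff_isUnit_det, B.isUnit_iff_isUnit_det]; tauto)
  have hBA : ∀ i j, 0 ≤ (B - A) i j := fun i j => sub_nonneg.2 (hAB i j)
  have := Matrix.mul_nonneg_of_nonneg (Matrix.mul_nonneg_of_nonneg hA₀ hBA) hB₀ i j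
  rw [← hsub, Matrix.sub_apply] at this
  exact sub_nonneg.1 this

end Entrywise

section Neg

variable {ι R : Type*} [Fintype ι] [DecidableEq ι] [CommRing R] {A : Matrix ι ι R}

lemma Matrix.isUnit_det_neg (h : IsUnit A.det) : IsUnit (-A).det := by
  rw [Matrix.det_neg]
  exact (isUnit_neg_one.pow _).mul h

lemma Matrix.inv_neg_of_isUnit_det (h : IsUnit A.det) : (-A)⁻¹ = -A⁻¹ :=
  Matrix.inv_eq_right_inv (by rw [neg_mul_neg, Matrix.mul_nonsing_inv _ h])

end Neg

lemma spectrum.tendsto_pow_atTop_nhds_zero_of_spectralRadius_lt_one {A : Type*} [NormedRing A]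
    [NormedAlgebra ℂ A] [CompleteSpace A] {a : A} (h : spectralRadius ℂ a < 1) :
    Tendsto (a ^ ·) atTop (𝓝 0) := by
  obtain ⟨r, hρr, hr1⟩ := ENNReal.lt_iff_exists_nnreal_btwn.1 h
  have hbound : ∀ᶠ k : ℕ in atTop, ‖a ^ k‖ ≤ (r : ℝ) ^ k := by
    filter_upwards [eventually_ge_atTop 1,
      (spectrum.pow_nnnorm_pow_one_div_tendsto_nhds_spectralRadius a).eventually_lt_const hρr]
      with k hk1 hk
    have hk0 : (0 : ℝ) < k := by exact_mod_cast hk1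
    have := ENNReal.rpow_le_rpow hk.le hk0.le
    rw [← ENNReal.rpow_mul, one_div_mul_cancel hk0.ne', ENNReal.rpow_one, ENNReal.rpow_natCast,
      ← ENNReal.coe_pow, ENNReal.coe_le_coe] at this
    exact_mod_cast this
  exact squeeze_zero_norm' hbound
    (tendsto_pow_atTop_nhds_zero_of_lt_one r.coe_nonneg (by exact_mod_cast hr1))

lemma spectrum.spectralRadius_lt_of_forall_nnnorm_lt {𝕜 A : Type*} [NormedField 𝕜]
    [ProperSpace 𝕜] [NormedRing A] [NormedAlgebra 𝕜 A] [CompleteSpace A] {a : A} {r : ℝ≥0}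
    (hr : 0 < r) (h : ∀ k ∈ spectrum 𝕜 a, ‖k‖₊ < r) : spectralRadius 𝕜 a < r := by
  rcases (spectrum 𝕜 a).eq_empty_or_nonempty with hσ | hσ
  · simpa [spectralRadius, hσ] using hr
  · exact spectrum.spectralRadius_lt_of_forall_lt_of_nonempty hσ h

lemma Matrix.linfty_opNNNorm_map_ofReal {m n : Type*} [Fintype m] [Fintype n]
    (A : Matrix m n ℝ) : ‖A.map Complex.ofReal‖₊ = ‖A‖₊ := by
  simp only [Matrix.linfty_opNNNorm_def, Matrix.map_apply, Complex.nnnorm_real]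

lemma Matrix.linfty_opNNNorm_le_of_nonneg_of_le {m n : Type*} [Fintype m] [Fintype n]
    {A B : Matrix m n ℝ} (hA : ∀ i j, 0 ≤ A i j) (hAB : ∀ i j, A i j ≤ B i j) :
    ‖A‖₊ ≤ ‖B‖₊ := by
  simp only [Matrix.linfty_opNNNorm_def]
  refine Finset.sup_mono_fun fun i _ => Finset.sum_le_sum fun j _ => ?_
  rw [← NNReal.coe_le_coe, coe_nnnorm, coe_nnnorm, Real.norm_of_nonneg (hA i j),
    Real.norm_of_nonneg ((hA i j).trans (hAB i j))]
  exact hAB i j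

lemma Matrix.linfty_opNNNorm_map_ofReal_pow {ι : Type*} [Fintype ι] [DecidableEq ι]
    (A : Matrix ι ι ℝ) (k : ℕ) : ‖A.map Complex.ofReal ^ k‖₊ = ‖A ^ k‖₊ := by
  rw [← Matrix.linfty_opNNNorm_map_ofReal (A ^ k)]
  exact congrArg _ (A.map_pow Complex.ofRealHom k).symm

lemma Matrix.tendsto_pow_atTop_nhds_zero_of_spectralRadius_map_ofReal_lt_one {ι : Type*}
    [Fintype ι] [DecidableEq ι] {A : Matrix ι ι ℝ}
    (h : spectralRadius ℂ (A.map Complex.ofReal) < 1) : Tendsto (A ^ ·) atTop (𝓝 0) := by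
  have := spectrum.tendsto_pow_atTop_nhds_zero_of_spectralRadius_lt_one h
  refine squeeze_zero_norm (fun k => ?_) (tendsto_zero_iff_norm_tendsto_zero.1 this)
  rw [← coe_nnnorm, ← coe_nnnorm, Matrix.linfty_opNNNorm_map_ofReal_pow]

lemma spectralRadius_map_ofReal_mono {ι : Type*} [Fintype ι] [DecidableEq ι]
    {A B : Matrix ι ι ℝ} (hA : ∀ i j, 0 ≤ A i j) (hAB : ∀ i j, A i j ≤ B i j) :
    spectralRadius ℂ (A.map Complex.ofReal) ≤ spectralRadius ℂ (B.map Complex.ofReal) := by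
  have hpow (k : ℕ) : ‖A.map Complex.ofReal ^ k‖₊ ≤ ‖B.map Complex.ofReal ^ k‖₊ := by
    rw [Matrix.linfty_opNNNorm_map_ofReal_pow, Matrix.linfty_opNNNorm_map_ofReal_pow]
    obtain ⟨hA₀, hle⟩ := Matrix.pow_nonneg_and_le hA hAB k
    exact Matrix.linfty_opNNNorm_le_of_nonneg_of_le hA₀ hle
  refine le_of_tendsto_of_tendsto'
    (spectrum.pow_nnnorm_pow_one_div_tendsto_nhds_spectralRadius _)
    (spectrum.pow_nnnorm_pow_one_div_tendsto_nhds_spectralRadius _) fun k => ?_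
  gcongr
  exact hpow k

lemma specRad_nonneg {n : ℕ} (A : Matrix (Fin n) (Fin n) ℝ) : 0 ≤ specRad A :=
  Real.sSup_nonneg (by rintro _ ⟨μ, -, rfl⟩; positivity)

lemma ofReal_specRad {n : ℕ} (A : Matrix (Fin n) (Fin n) ℝ) :
    ENNReal.ofReal (specRad A) = spectralRadius ℂ (A.map Complex.ofReal) := by
  rcases (spectrum ℂ (A.map Complex.ofReal)).eq_empty_or_nonempty with hσ | hσ
  · simp [specRad, spectralRadius, hσ]
  obtain ⟨k, hk, hkρ⟩ := spectrum.exists_nnnorm_eq_spectralRadius_of_nonempty hσ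
  have hmax : IsGreatest {x : ℝ | ∃ μ ∈ spectrum ℂ (A.map Complex.ofReal), x = ‖μ‖} ‖k‖ := by
    refine ⟨⟨k, hk, rfl⟩, ?_⟩
    rintro _ ⟨μ, hμ, rfl⟩
    have : (‖μ‖₊ : ℝ≥0∞) ≤ ‖k‖₊ := hkρ ▸ le_iSup₂ (f := fun z _ => (‖z‖₊ : ℝ≥0∞)) μ hμ
    exact_mod_cast this
  rw [specRad, hmax.csSup_eq, ← hkρ, ofReal_norm]
  rfl

lemma specRad_mono {n : ℕ} {A B : Matrix (Fin n) (Fin n) ℝ} (hA : ∀ i j, 0 ≤ A i j)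
    (hAB : ∀ i j, A i j ≤ B i j) : specRad A ≤ specRad B := by
  rw [← ENNReal.ofReal_le_ofReal_iff (specRad_nonneg B), ofReal_specRad, ofReal_specRad]
  exact spectralRadius_map_ofReal_mono hA hAB

lemma specRad_neg {n : ℕ} (A : Matrix (Fin n) (Fin n) ℝ) : specRad (-A) = specRad A := by
  simp only [specRad, Matrix.map_neg _ Complex.ofReal_neg, ← spectrum.neg_eq]
  congr 1
  ext x
  constructor
  · rintro ⟨μ, hμ, rfl⟩
    exact ⟨-μ, hμ, (norm_neg μ).symm⟩
  · rintro ⟨μ, hμ, rfl⟩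
    exact ⟨-μ, by simpa using hμ, (norm_neg μ).symm⟩

lemma Matrix.inv_one_sub_nonneg_of_tendsto_pow {ι : Type*} [Fintype ι] [DecidableEq ι]
    {A : Matrix ι ι ℝ} (hA : ∀ i j, 0 ≤ A i j) (hdet : IsUnit (1 - A).det)
    (hpow : Tendsto (A ^ ·) atTop (𝓝 0)) (i j : ι) : 0 ≤ (1 - A)⁻¹ i j := by
  set X := (1 - A)⁻¹
  -- truncating the Neumann series: `X = ∑_{k < N} A ^ k + A ^ N * X`, with nonnegative sum
  have hsplit (N : ℕ) : ∑ k ∈ Finset.range N, A ^ k = X - A ^ N * X := by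
    rw [← one_sub_mul, ← geom_sum_mul_neg, mul_assoc, Matrix.mul_nonsing_inv _ hdet, mul_one]
  have hle (N : ℕ) : (A ^ N * X) i j ≤ X i j := by
    have : 0 ≤ (∑ k ∈ Finset.range N, A ^ k) i j := by
      rw [Matrix.sum_apply]
      exact Finset.sum_nonneg fun k _ =>
        (Matrix.pow_nonneg_and_le hA (fun _ _ => le_rfl) k).1 i j
    rw [hsplit, Matrix.sub_apply] at this
    linarith
  have htend : Tendsto (fun N => (A ^ N * X) i j) atTop (𝓝 0) := by
    have := hpow.mul_const X
    rw [zero_mul] at this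
    exact ((continuous_apply j).comp (continuous_apply i)).tendsto 0 |>.comp this
  exact le_of_tendsto' htend hle

lemma IsHurwitz.isUnit_det {n : ℕ} {V : Matrix (Fin n) (Fin n) ℝ} (hV : IsHurwitz V) :
    IsUnit V.det := by
  have h0 : (0 : ℂ) ∉ spectrum ℂ (V.map Complex.ofReal) := fun h => (hV 0 h).false
  rw [spectrum.zero_mem_iff, not_not, Matrix.isUnit_iff_isUnit_det] at h0
  have hdet : (V.map Complex.ofReal).det = (V.det : ℂ) := (Complex.ofRealHom.map_det V).symm
  rw [hdet, isUnit_iff_ne_zero, Complex.ofReal_ne_zero] at h0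
  exact h0.isUnit

lemma Complex.eventually_norm_one_add_mul_lt_one {w : ℂ} (hw : w.re < 0) :
    ∀ᶠ t : ℝ in 𝓝[>] 0, ‖1 + t * w‖ < 1 := by
  have hw₀ : 0 < Complex.normSq w := Complex.normSq_pos.2 fun h => by simp [h] at hw
  filter_upwards [Ioo_mem_nhdsGT (div_pos (by linarith : 0 < -2 * w.re) hw₀)]
    with t ⟨ht₀, ht⟩
  rw [lt_div_iff₀ hw₀, Complex.normSq_apply] at ht
  rw [← sq_lt_one_iff₀ (norm_nonneg _), Complex.sq_norm, Complex.normSq_apply]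
  simp only [Complex.add_re, Complex.add_im, Complex.one_re, Complex.one_im, Complex.mul_re,
    Complex.mul_im, Complex.ofReal_re, Complex.ofReal_im]
  nlinarith

lemma IsHurwitz.eventually_spectralRadius_one_add_smul_lt_one {n : ℕ}
    {V : Matrix (Fin n) (Fin n) ℝ} (hV : IsHurwitz V) :
    ∀ᶠ t : ℝ in 𝓝[>] 0, spectralRadius ℂ ((1 + t • V).map Complex.ofReal) < 1 := by
  filter_upwards [(Matrix.finite_spectrum (V.map Complex.ofReal)).eventually_all.2
    fun w hw => Complex.eventually_norm_one_add_mul_lt_one (hV w hw), self_mem_nhdsWithin]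
    with t ht ht₀
  have ht₀' : (t : ℂ) ≠ 0 := Complex.ofReal_ne_zero.2 (ne_of_gt ht₀)
  have hmap : (1 + t • V).map Complex.ofReal =
      algebraMap ℂ _ 1 + Units.mk0 (t : ℂ) ht₀' • V.map Complex.ofReal := by
    ext i j
    by_cases h : i = j <;> simp [h]
  refine spectrum.spectralRadius_lt_of_forall_nnnorm_lt one_pos fun μ hμ => ?_
  rw [hmap, ← spectrum.singleton_add_eq, spectrum.unit_smul_eq_smul] at hμ
  obtain ⟨_, rfl, _, ⟨w, hw, rfl⟩, rfl⟩ := hμ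
  rw [← NNReal.coe_lt_coe, coe_nnnorm]
  simpa using ht w hw

lemma IsMetzler.eventually_one_add_smul_nonneg {n : ℕ} {V : Matrix (Fin n) (Fin n) ℝ}
    (hV : IsMetzler V) : ∀ᶠ t : ℝ in 𝓝[>] 0, ∀ i j, 0 ≤ (1 + t • V) i j := by
  have hdiag : ∀ᶠ t : ℝ in 𝓝[>] 0, ∀ i, 0 < 1 + t * V i i :=
    eventually_all.2 fun i => nhdsWithin_le_nhds <|
      ((continuous_const.add (continuous_id.mul continuous_const)).tendsto' 0 1
        (by simp)).eventually (lt_mem_nhds one_pos)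
  filter_upwards [hdiag, self_mem_nhdsWithin] with t hdiag ht₀ i j
  by_cases h : i = j
  · subst h
    simpa using (hdiag i).le
  · simpa [h] using mul_nonneg (le_of_lt ht₀) (hV i j h)

lemma IsMetzler.inv_neg_nonneg {n : ℕ} {V : Matrix (Fin n) (Fin n) ℝ} (hVm : IsMetzler V)
    (hVh : IsHurwitz V) (i j : Fin n) : 0 ≤ (-V)⁻¹ i j := by
  obtain ⟨t, ⟨hA, hρ⟩, ht₀⟩ := ((hVm.eventually_one_add_smul_nonneg.and
    hVh.eventually_spectralRadius_one_add_smul_lt_one).and self_mem_nhdsWithin).exists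
  have hsub : 1 - (1 + t • V) = t • -V := by rw [sub_add_cancel_left, smul_neg]
  have hdet := Matrix.isUnit_det_neg hVh.isUnit_det
  have htdet : IsUnit (1 - (1 + t • V)).det := by
    rw [hsub, Matrix.det_smul]
    exact ((Ne.isUnit (ne_of_gt ht₀)).pow _).mul hdet
  have := Matrix.inv_one_sub_nonneg_of_tendsto_pow hA htdet
    (Matrix.tendsto_pow_atTop_nhds_zero_of_spectralRadius_map_ofReal_lt_one hρ) i j
  have hinv : (t • -V)⁻¹ = t⁻¹ • (-V)⁻¹ := by
    simpa [Units.smul_def] using Matrix.inv_smul' (A := -V) (Units.mk0 t (ne_of_gt ht₀)) hdet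
  rw [hsub, hinv, Matrix.smul_apply, smul_eq_mul] at this
  exact (mul_nonneg_iff_of_pos_left (inv_pos.2 ht₀)).1 this

/-- If `0 ≤ F' ≤ F` entrywise and `V' ≤ V` are Metzler and Hurwitz, then
`ρ(F' (V')⁻¹) ≤ ρ(F V⁻¹)`. -/
theorem specRad_mul_inv_mono {n : ℕ} (F F' V V' : Matrix (Fin n) (Fin n) ℝ)
    (hF'nonneg : ∀ i j, 0 ≤ F' i j) (hF'le : ∀ i j, F' i j ≤ F i j)
    (hVmetzler : IsMetzler V) (hVhurwitz : IsHurwitz V)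
    (hV'metzler : IsMetzler V') (hV'hurwitz : IsHurwitz V')
    (hVle : ∀ i j, V' i j ≤ V i j) :
    specRad (F' * V'⁻¹) ≤ specRad (F * V⁻¹) := by
  have hdet := hVhurwitz.isUnit_det
  have hdet' := hV'hurwitz.isUnit_det
  have hinv₀ := hVmetzler.inv_neg_nonneg hVhurwitz
  have hinv₀' := hV'metzler.inv_neg_nonneg hV'hurwitz
  have hinv_le : ∀ i j, (-V')⁻¹ i j ≤ (-V)⁻¹ i j :=
    Matrix.inv_le_inv_of_le (Matrix.isUnit_det_neg hdet) (Matrix.isUnit_det_neg hdet') hinv₀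
      hinv₀' fun i j => neg_le_neg (hVle i j)
  rw [← specRad_neg, ← specRad_neg (F * V⁻¹), ← mul_neg, ← mul_neg,
    ← Matrix.inv_neg_of_isUnit_det hdet, ← Matrix.inv_neg_of_isUnit_det hdet']
  exact specRad_mono (Matrix.mul_nonneg_of_nonneg hF'nonneg hinv₀')
    (Matrix.mul_le_mul_of_nonneg hF'nonneg hinv₀' hF'le hinv_le)
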